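/- There exists a finitely-additive signed measure ν minimising the supremum distance from f_{k,n} to the space of finitely-additive signed measures on Ω_{k,n}, such that for every j ≤ n the map x ↦ ν({x}) is constant on X_j. -/

import Mathlib

/-!
The nearest measure can be taken to be a multiple of counting measure, `ν A = λ * #A`. Its error
`fkn A - λ * #A` is extremal on the crosses `X_j ∪ {x | x.2 = i}`, the smallest sets (of size
`a = n + k - 1`) where `fkn` is `3`, and on the largest sets (of size `b = n * k - min n k`) where
`fkn` is `1`. Equating the error `+d` on the former with `-d` on the latter gives `λ = 4 / (a + b)`
and `d = (3 * b - a) / (a + b)`.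

Conversely, let `μ` be within `C` of `fkn`. Averaging the constraint over all crosses, over the
complements of the blocks `X_j`, and over the complements of the columns `{x | x.2 = i}` involves
only `S = μ univ`, because every point lies in equally many sets of each family. This gives
`n * k * (3 - C) ≤ a * S` and `b * S ≤ n * k * (1 + C)`, and eliminating `S` yields `d ≤ C`.
-/

open Finset

def fkn (n k : ℕ) (A : Finset (Fin n × Fin k)) : ℝ :=
  if A = ∅ then 0
  else if (∀ j : Fin n, ∃ i : Fin k, (j, i) ∈ A) ∧ (∃ j : Fin n, ∀ i : Fin k, (j, i) ∈ A)
    then 3 else 1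

def IsAdditive {Ω : Type*} [DecidableEq Ω] (μ : Finset Ω → ℝ) : Prop :=
  μ ∅ = 0 ∧ ∀ A B : Finset Ω, Disjoint A B → μ (A ∪ B) = μ A + μ B

namespace IsAdditive

variable {Ω : Type*} [DecidableEq Ω] {μ : Finset Ω → ℝ}

theorem apply_eq_sum (hμ : IsAdditive μ) (A : Finset Ω) : μ A = ∑ x ∈ A, μ {x} := by
  induction A using Finset.induction_on with
  | empty => simp [hμ.1]
  | insert a s ha ih =>
    rw [sum_insert ha, ← ih, insert_eq, hμ.2 _ _ (disjoint_singleton_left.2 ha)]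

variable [Fintype Ω] {ι : Type*} [Fintype ι]

theorem sum_apply_eq_mul (hμ : IsAdditive μ) (A : ι → Finset Ω) {r : ℝ}
    (hr : ∀ x, (#{i | x ∈ A i} : ℝ) = r) : ∑ i, μ (A i) = r * μ univ := by
  classical
  calc ∑ i, μ (A i) = ∑ i, ∑ x, if x ∈ A i then μ {x} else 0 := by
        simp_rw [sum_ite_mem, univ_inter, ← hμ.apply_eq_sum]
    _ = ∑ x, (#{i | x ∈ A i} : ℝ) * μ {x} := by
        rw [sum_comm]; simp_rw [← sum_filter, sum_const, nsmul_eq_mul]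
    _ = r * μ univ := by simp_rw [hr, ← mul_sum, ← hμ.apply_eq_sum]

theorem abs_card_mul_sub_le (hμ : IsAdditive μ) (A : ι → Finset Ω) {r : ℝ}
    (hr : ∀ x, (#{i | x ∈ A i} : ℝ) = r) {c C : ℝ} (h : ∀ i, |c - μ (A i)| ≤ C) :
    |Fintype.card ι * c - r * μ univ| ≤ Fintype.card ι * C := by
  calc |Fintype.card ι * c - r * μ univ| = |∑ i, (c - μ (A i))| := by
        rw [sum_sub_distrib, hμ.sum_apply_eq_mul A hr]; simp
    _ ≤ ∑ i, |c - μ (A i)| := abs_sum_le_sum_abs _ _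
    _ ≤ ∑ _i : ι, C := sum_le_sum fun i _ => h i
    _ = Fintype.card ι * C := by simp

end IsAdditive

theorem isAdditive_const_mul_card {Ω : Type*} [DecidableEq Ω] (c : ℝ) :
    IsAdditive (fun A : Finset Ω => c * #A) :=
  ⟨by simp, fun A B h => by simp only [card_union_of_disjoint h]; push_cast; ring⟩

theorem card_add_card_le_of_subset_compl {α : Type*} [Fintype α] [DecidableEq α]
    {A T : Finset α} (h : T ⊆ Aᶜ) : #A + #T ≤ Fintype.card α := by
  have := card_add_card_compl A
  have := card_le_card h
  omega

section Grid

variable {n k : ℕ}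

def cross (j : Fin n) (i : Fin k) : Finset (Fin n × Fin k) := {x | x.1 = j ∨ x.2 = i}

theorem card_filter_fst_ne (x : Fin n × Fin k) :
    (#{j | x ∈ ({y | y.1 ≠ j} : Finset _)} : ℝ) = n - 1 := by
  have h := card_erase_add_one (mem_univ x.1)
  simp only [mem_filter, mem_univ, true_and, card_univ, Fintype.card_fin] at h ⊢
  rw [filter_ne univ x.1]
  have : (#(univ.erase x.1) : ℝ) + 1 = n := by exact_mod_cast h
  linarith

theorem card_filter_snd_ne (x : Fin n × Fin k) :
    (#{i | x ∈ ({y | y.2 ≠ i} : Finset _)} : ℝ) = k - 1 := by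
  have h := card_erase_add_one (mem_univ x.2)
  simp only [mem_filter, mem_univ, true_and, card_univ, Fintype.card_fin] at h ⊢
  rw [filter_ne univ x.2]
  have : (#(univ.erase x.2) : ℝ) + 1 = k := by exact_mod_cast h
  linarith

theorem card_filter_mem_cross (x : Fin n × Fin k) :
    (#{p : Fin n × Fin k | x ∈ cross p.1 p.2} : ℝ) = n + k - 1 := by
  have hunion : ({p : Fin n × Fin k | x ∈ cross p.1 p.2} : Finset _) =
      ({x.1} ×ˢ univ) ∪ (univ ×ˢ {x.2}) := by
    ext p
    simp only [cross, mem_filter, mem_univ, true_and, mem_union, mem_product, mem_singleton]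
    tauto
  have hinter : ({x.1} ×ˢ univ) ∩ (univ ×ˢ {x.2}) = {x} := by
    ext p
    simp only [mem_inter, mem_product, mem_singleton, mem_univ, and_true, true_and, Prod.ext_iff]
  have h := card_union_add_card_inter ({x.1} ×ˢ (univ : Finset (Fin k))) (univ ×ˢ {x.2})
  rw [← hunion, hinter] at h
  simp only [card_product, card_singleton, card_univ, Fintype.card_fin, one_mul, mul_one] at h
  have : (#{p : Fin n × Fin k | x ∈ cross p.1 p.2} : ℝ) + 1 = k + n := by exact_mod_cast h
  linarith

theorem fkn_filter_fst_ne (hn : 2 ≤ n) (hk : 1 ≤ k) (j : Fin n) :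
    fkn n k {x | x.1 ≠ j} = 1 := by
  obtain ⟨j', hj'⟩ := Fintype.exists_ne_of_one_lt_card (by simp; omega) j
  have hne : ({x | x.1 ≠ j} : Finset (Fin n × Fin k)) ≠ ∅ :=
    ne_empty_of_mem (a := (j', ⟨0, hk⟩)) (by simpa using hj')
  rw [fkn, if_neg hne, if_neg]
  rintro ⟨hmeets, -⟩
  obtain ⟨i, hi⟩ := hmeets j
  simp at hi

theorem fkn_filter_snd_ne (hn : 1 ≤ n) (hk : 2 ≤ k) (i : Fin k) :
    fkn n k {x | x.2 ≠ i} = 1 := by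
  obtain ⟨i', hi'⟩ := Fintype.exists_ne_of_one_lt_card (by simp; omega) i
  have hne : ({x | x.2 ≠ i} : Finset (Fin n × Fin k)) ≠ ∅ :=
    ne_empty_of_mem (a := (⟨0, hn⟩, i')) (by simpa using hi')
  rw [fkn, if_neg hne, if_neg]
  rintro ⟨-, j, hj⟩
  simpa using hj i

theorem fkn_cross (j : Fin n) (i : Fin k) : fkn n k (cross j i) = 3 := by
  have hne : cross j i ≠ ∅ := ne_empty_of_mem (a := (j, i)) (by simp [cross])
  rw [fkn, if_neg hne, if_pos]
  exact ⟨fun j' => ⟨i, by simp [cross]⟩, j, fun i' => by simp [cross]⟩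

theorem add_le_card_add_one {A : Finset (Fin n × Fin k)} (hmeets : ∀ j, ∃ i, (j, i) ∈ A)
    (hcontains : ∃ j, ∀ i, (j, i) ∈ A) : n + k ≤ #A + 1 := by
  choose g hg using hmeets
  obtain ⟨j₀, hj₀⟩ := hcontains
  set T := ({j₀} ×ˢ univ) ∪ ((univ.erase j₀).image fun j => (j, g j))
  have hTA : T ⊆ A := by
    intro x hx
    simp only [T, mem_union, mem_product, mem_singleton, mem_univ, and_true, mem_image,
      mem_erase] at hx
    rcases hx with hx | ⟨j, -, rfl⟩
    · rw [← hx] at hj₀; exact hj₀ x.2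
    · exact hg j
  have hdisj : Disjoint ({j₀} ×ˢ univ) ((univ.erase j₀).image fun j => (j, g j)) := by
    simp only [disjoint_left, mem_product, mem_singleton, mem_univ, and_true, mem_image,
      mem_erase, not_exists, not_and]
    rintro x hx j hj rfl
    exact hj hx
  have hT : #T = k + #(univ.erase j₀) := by
    rw [card_union_of_disjoint hdisj, card_image_of_injective _ fun a b h => congrArg Prod.fst h]
    simp
  have := card_erase_add_one (mem_univ j₀)
  have := card_le_card hTA
  simp only [card_univ, Fintype.card_fin] at *
  omega

theorem card_add_min_le {A : Finset (Fin n × Fin k)}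
    (h : ¬((∀ j, ∃ i, (j, i) ∈ A) ∧ ∃ j, ∀ i, (j, i) ∈ A)) :
    #A + min n k ≤ n * k := by
  by_cases hmeets : ∀ j, ∃ i, (j, i) ∈ A
  · have hmiss : ∀ j, ∃ i, (j, i) ∉ A := by simpa [hmeets] using h
    choose g hg using hmiss
    have hT : univ.image (fun j => (j, g j)) ⊆ Aᶜ := by
      simpa [subset_iff] using hg
    have := card_add_card_le_of_subset_compl hT
    rw [card_image_of_injective _ fun a b h => congrArg Prod.fst h, card_univ,
      Fintype.card_prod, Fintype.card_fin, Fintype.card_fin] at this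
    omega
  · simp only [not_forall, not_exists] at hmeets
    obtain ⟨j, hj⟩ := hmeets
    have hT : {j} ×ˢ univ ⊆ Aᶜ := by
      intro x hx
      simp only [mem_product, mem_singleton, mem_univ, and_true] at hx
      simpa [← hx] using hj x.2
    have := card_add_card_le_of_subset_compl hT
    simp only [card_product, card_singleton, card_univ, Fintype.card_prod, Fintype.card_fin,
      one_mul] at this
    omega

noncomputable def fknDist (n k : ℕ) : ℝ :=
  (3 * (n * k - min (n : ℝ) k) - (n + k - 1)) / (n * k - min (n : ℝ) k + (n + k - 1))

noncomputable def fknNearest (n k : ℕ) (A : Finset (Fin n × Fin k)) : ℝ :=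
  4 / (n * k - min (n : ℝ) k + (n + k - 1)) * #A

theorem abs_fkn_sub_fknNearest_le (hn : 2 ≤ n) (hk : 2 ≤ k) (A : Finset (Fin n × Fin k)) :
    |fkn n k A - fknNearest n k A| ≤ fknDist n k := by
  have hn' : (2 : ℝ) ≤ n := by exact_mod_cast hn
  have hk' : (2 : ℝ) ≤ k := by exact_mod_cast hk
  have hmn : min (n : ℝ) k ≤ n := min_le_left _ _
  have hmk : min (n : ℝ) k ≤ k := min_le_right _ _
  have hm2 : 2 ≤ min (n : ℝ) k := le_min hn' hk'
  have hnk : 2 * k ≤ (n : ℝ) * k := by nlinarith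
  have hkn : 2 * n ≤ (n : ℝ) * k := by nlinarith
  have hprod : 0 ≤ ((n : ℝ) - 2) * (k - 1) := mul_nonneg (by linarith) (by linarith)
  have hcard : (#A : ℝ) ≤ n * k := by exact_mod_cast (card_le_univ A).trans (by simp)
  set D : ℝ := n * k - min (n : ℝ) k + (n + k - 1) with hD_def
  have hD : 0 < D := by linarith
  rw [fknDist, fknNearest, show fkn n k A - 4 / D * #A = (fkn n k A * D - 4 * #A) / D by
    field_simp, abs_div, abs_of_pos hD, div_le_div_iff_of_pos_right hD, abs_le, hD_def]
  unfold fkn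
  split_ifs with hempty hthree
  · subst hempty
    simp only [card_empty, Nat.cast_zero]
    constructor <;> linarith
  · obtain ⟨hmeets, hcontains⟩ := hthree
    have : (n + k : ℝ) ≤ #A + 1 := by exact_mod_cast add_le_card_add_one hmeets hcontains
    constructor <;> linarith
  · have : (#A : ℝ) + min (n : ℝ) k ≤ n * k := by exact_mod_cast card_add_min_le hthree
    have : (1 : ℝ) ≤ #A := by exact_mod_cast card_pos.2 (nonempty_iff_ne_empty.2 hempty)
    constructor <;> linarith

theorem fknDist_le (hn : 2 ≤ n) (hk : 2 ≤ k) {μ : Finset (Fin n × Fin k) → ℝ}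
    (hμ : IsAdditive μ) {C : ℝ} (hC : ∀ A, |fkn n k A - μ A| ≤ C) : fknDist n k ≤ C := by
  have hrow := hμ.abs_card_mul_sub_le
    (fun j : Fin n => ({x | x.1 ≠ j} : Finset (Fin n × Fin k))) card_filter_fst_ne
    (c := 1) (C := C) fun j => by
      have := hC {x | x.1 ≠ j}
      rwa [fkn_filter_fst_ne hn (by omega)] at this
  have hcol := hμ.abs_card_mul_sub_le
    (fun i : Fin k => ({x | x.2 ≠ i} : Finset (Fin n × Fin k))) card_filter_snd_ne
    (c := 1) (C := C) fun i => by
      have := hC {x | x.2 ≠ i}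
      rwa [fkn_filter_snd_ne (by omega) hk] at this
  have hcross := hμ.abs_card_mul_sub_le (fun p : Fin n × Fin k => cross p.1 p.2)
    card_filter_mem_cross (c := 3) (C := C) fun p => by
      simpa only [fkn_cross] using hC (cross p.1 p.2)
  simp only [Fintype.card_fin, Fintype.card_prod, Nat.cast_mul, mul_one] at hrow hcol hcross
  set S := μ univ
  have hn' : (2 : ℝ) ≤ n := by exact_mod_cast hn
  have hk' : (2 : ℝ) ≤ k := by exact_mod_cast hk
  have hb : 0 ≤ (n : ℝ) * k - min (n : ℝ) k := by
    nlinarith [min_le_left (n : ℝ) k]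
  have hbS : ((n : ℝ) * k - min (n : ℝ) k) * S ≤ n * k * (1 + C) := by
    rcases le_total n k with h | h
    · have hcol' : (k - 1) * S ≤ k * (1 + C) := by linarith [(abs_le.1 hcol).1]
      rw [min_eq_left (by exact_mod_cast h)]
      nlinarith [mul_le_mul_of_nonneg_left hcol' (by positivity : (0 : ℝ) ≤ n)]
    · have hrow' : (n - 1) * S ≤ n * (1 + C) := by linarith [(abs_le.1 hrow).1]
      rw [min_eq_right (by exact_mod_cast h)]
      nlinarith [mul_le_mul_of_nonneg_left hrow' (by positivity : (0 : ℝ) ≤ k)]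
  have hcross' : n * k * (3 - C) ≤ (n + k - 1) * S := by linarith [(abs_le.1 hcross).2]
  have hscaled : (n * k : ℝ) * ((n * k - min (n : ℝ) k) * (3 - C)) ≤
      n * k * ((n + k - 1) * (1 + C)) := by
    nlinarith [mul_le_mul_of_nonneg_left hcross' hb,
      mul_le_mul_of_nonneg_left hbS (by linarith : (0 : ℝ) ≤ n + k - 1)]
  have hkey := le_of_mul_le_mul_left hscaled (by positivity)
  rw [fknDist, div_le_iff₀ (by linarith)]
  linarith

end Grid

theorem stmt_12 (n k : ℕ) (hn : 2 ≤ n) (hk : 2 ≤ k) :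
    ∃ ν : Finset (Fin n × Fin k) → ℝ, IsAdditive ν ∧
      (∀ j : Fin n, ∀ x y : Fin k, ν {(j, x)} = ν {(j, y)}) ∧
      (∀ μ : Finset (Fin n × Fin k) → ℝ, IsAdditive μ →
        ∀ C : ℝ, (∀ A, |fkn n k A - μ A| ≤ C) → ∀ A, |fkn n k A - ν A| ≤ C) :=
  ⟨fknNearest n k, isAdditive_const_mul_card _, fun j x y => by simp [fknNearest],
    fun _ hμ _ hC A => (abs_fkn_sub_fknNearest_le hn hk A).trans (fknDist_le hn hk hμ hC)⟩
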